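/- Let s ∈ (0,1/2) and let f : ℝ → ℂ be measurable. Define F : ℝ → ℂ by F(t) := f(t) for t > 0 and F(t) := 0 for t ≤ 0. Then [F]²_{s,ℝ} = [f]²_{s,(0,∞)} + (1/s)·∫₀^∞ |f(t)|²·t^{−2s} dt, as an identity in [0,∞]. -/

import Mathlib

open MeasureTheory
open scoped ENNReal NNReal

/-- The squared Slobodeckij (Gagliardo) seminorm
`[g]²_{s,A} = ∫_A ∫_A |g(x) − g(y)|² / |x − y|^{1+2s} dx dy`, valued in `[0,∞]`. -/
noncomputable def slobSq (s : ℝ) (A : Set ℝ) (g : ℝ → ℂ) : ℝ≥0∞ :=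
  ∫⁻ x in A, ∫⁻ y in A,
    (‖g x - g y‖₊ : ℝ≥0∞) ^ 2 / ENNReal.ofReal (|x - y| ^ (1 + 2 * s))

/-! Split the outer integral of `[F]²_{s,ℝ}` at `0`. Pairs with both points in `(0,∞)` give
`[f]²_{s,(0,∞)}`. Pairs with exactly one point `x > 0` give `|f(x)|²` times the kernel integrated
over `(-∞,0]`, which is `x^{-2s}/(2s)`; by Tonelli and the symmetry of the kernel the two orders of
such pairs contribute equally, whence the factor `1/s`. -/

theorem lintegral_Iic_inv_ofReal_abs_sub_rpow {p : ℝ} (hp : 0 < p) {x : ℝ} (hx : 0 < x) :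
    ∫⁻ y in Set.Iic 0, (ENNReal.ofReal (|x - y| ^ (1 + p)))⁻¹
      = ENNReal.ofReal (1 / p) * ENNReal.ofReal (x ^ (-p)) := by
  have hr : -(1 + p) < -1 := by linarith
  have hpre : (fun y : ℝ => x - y) ⁻¹' Set.Ici x = Set.Iic 0 := by
    ext y; simp
  calc ∫⁻ y in Set.Iic 0, (ENNReal.ofReal (|x - y| ^ (1 + p)))⁻¹
      = ∫⁻ y in Set.Iic 0, ENNReal.ofReal ((x - y) ^ (-(1 + p))) := by
        refine setLIntegral_congr_fun measurableSet_Iic fun y (hy : y ≤ 0) => ?_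
        have hpos : 0 < x - y := by linarith
        rw [abs_of_pos hpos, Real.rpow_neg hpos.le,
          ENNReal.ofReal_inv_of_pos (Real.rpow_pos_of_pos hpos _)]
    _ = ∫⁻ u in Set.Ioi x, ENNReal.ofReal (u ^ (-(1 + p))) := by
        rw [← hpre, Measure.restrict_congr_set Ioi_ae_eq_Ici]
        exact (Measure.measurePreserving_sub_left volume x).setLIntegral_comp_preimage_emb
          (MeasurableEquiv.subLeft x).measurableEmbedding
          (fun u => ENNReal.ofReal (u ^ (-(1 + p)))) _
    _ = ENNReal.ofReal (1 / p) * ENNReal.ofReal (x ^ (-p)) := by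
        rw [← ofReal_integral_eq_lintegral_ofReal (integrableOn_Ioi_rpow_of_lt hr hx)
          ((ae_restrict_iff' measurableSet_Ioi).2 (.of_forall fun u hu =>
            Real.rpow_nonneg (hx.trans hu).le _)),
          integral_Ioi_rpow_of_lt hr hx, ← ENNReal.ofReal_mul (by positivity)]
        congr 1
        rw [show -(1 + p) + 1 = -p by ring]
        field_simp

theorem slobSq_univ_indicator (s : ℝ) {A : Set ℝ} (hA : MeasurableSet A) {f : ℝ → ℂ}
    (hf : Measurable f) :
    slobSq s Set.univ (A.indicator f) = slobSq s A f +
      2 * ∫⁻ x in A, (‖f x‖₊ : ℝ≥0∞) ^ 2 *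
        ∫⁻ y in Aᶜ, (ENNReal.ofReal (|x - y| ^ (1 + 2 * s)))⁻¹ := by
  set k : ℝ → ℝ → ℝ≥0∞ := fun x y => ENNReal.ofReal (|x - y| ^ (1 + 2 * s))
  have inner_mem : ∀ x ∈ A, ∫⁻ y, (‖A.indicator f x - A.indicator f y‖₊ : ℝ≥0∞) ^ 2 / k x y
      = (∫⁻ y in A, (‖f x - f y‖₊ : ℝ≥0∞) ^ 2 / k x y) +
        (‖f x‖₊ : ℝ≥0∞) ^ 2 * ∫⁻ y in Aᶜ, (k x y)⁻¹ := by
    intro x hx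
    rw [← lintegral_add_compl _ hA, ← lintegral_const_mul' _ _ (by simp)]
    congr 1
    · refine setLIntegral_congr_fun hA fun y hy => ?_
      simp only [Set.indicator_of_mem hx, Set.indicator_of_mem hy]
    · refine setLIntegral_congr_fun hA.compl fun y hy => ?_
      simp only [Set.indicator_of_mem hx, Set.indicator_of_notMem hy, sub_zero, div_eq_mul_inv]
  have inner_notMem : ∀ x ∈ Aᶜ, ∫⁻ y, (‖A.indicator f x - A.indicator f y‖₊ : ℝ≥0∞) ^ 2 / k x y
      = ∫⁻ y in A, (‖f y‖₊ : ℝ≥0∞) ^ 2 * (k y x)⁻¹ := by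
    intro x hx
    rw [← lintegral_add_compl _ hA, setLIntegral_eq_zero hA.compl fun y hy => ?_, add_zero]
    · refine setLIntegral_congr_fun hA fun y hy => ?_
      simp only [Set.indicator_of_notMem hx, Set.indicator_of_mem hy, zero_sub, nnnorm_neg,
        div_eq_mul_inv, k, abs_sub_comm]
    · simp [Set.indicator_of_notMem hx, Set.indicator_of_notMem hy]
  have hmeas : Measurable fun x => (‖f x‖₊ : ℝ≥0∞) ^ 2 * ∫⁻ y in Aᶜ, (k x y)⁻¹ := by
    have : Measurable fun p : ℝ × ℝ => (k p.1 p.2)⁻¹ := by fun_prop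
    exact (hf.nnnorm.coe_nnreal_ennreal.pow_const 2).mul this.lintegral_prod_right'
  calc slobSq s Set.univ (A.indicator f)
      = (∫⁻ x in A, ((∫⁻ y in A, (‖f x - f y‖₊ : ℝ≥0∞) ^ 2 / k x y) +
          (‖f x‖₊ : ℝ≥0∞) ^ 2 * ∫⁻ y in Aᶜ, (k x y)⁻¹)) +
        ∫⁻ x in Aᶜ, ∫⁻ y in A, (‖f y‖₊ : ℝ≥0∞) ^ 2 * (k y x)⁻¹ := by
        rw [slobSq, Measure.restrict_univ, ← lintegral_add_compl _ hA,
          setLIntegral_congr_fun hA inner_mem, setLIntegral_congr_fun hA.compl inner_notMem]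
    _ = slobSq s A f + 2 * ∫⁻ x in A, (‖f x‖₊ : ℝ≥0∞) ^ 2 * ∫⁻ y in Aᶜ, (k x y)⁻¹ := by
        have hswap : ∫⁻ x in Aᶜ, ∫⁻ y in A, (‖f y‖₊ : ℝ≥0∞) ^ 2 * (k y x)⁻¹
            = ∫⁻ y in A, (‖f y‖₊ : ℝ≥0∞) ^ 2 * ∫⁻ x in Aᶜ, (k y x)⁻¹ := by
          rw [lintegral_lintegral_swap (by fun_prop)]
          exact lintegral_congr fun y => lintegral_const_mul' _ _ (by simp)
        rw [lintegral_add_right _ hmeas, hswap, two_mul, ← add_assoc]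
        rfl

theorem stmt_16 (s : ℝ) (hs : s ∈ Set.Ioo (0 : ℝ) (1/2)) (f : ℝ → ℂ) (hf : Measurable f) :
    slobSq s Set.univ (fun t => if 0 < t then f t else 0) =
      slobSq s (Set.Ioi 0) f +
        ENNReal.ofReal (1/s) *
          ∫⁻ t in Set.Ioi (0 : ℝ), (‖f t‖₊ : ℝ≥0∞) ^ 2 * ENNReal.ofReal (t ^ (-(2 * s))) := by
  have h2s : 0 < 2 * s := by linarith [hs.1]
  have hc : 2 * ENNReal.ofReal (1 / (2 * s)) = ENNReal.ofReal (1 / s) := by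
    rw [← ENNReal.ofReal_ofNat 2, ← ENNReal.ofReal_mul zero_le_two]
    congr 1
    field_simp
  rw [show (fun t => if 0 < t then f t else 0) = (Set.Ioi 0).indicator f from rfl,
    slobSq_univ_indicator s measurableSet_Ioi hf, Set.compl_Ioi, ← hc, mul_assoc,
    ← lintegral_const_mul' _ _ ENNReal.ofReal_ne_top]
  refine congrArg (_ + 2 * ·) (setLIntegral_congr_fun measurableSet_Ioi fun x hx => ?_)
  rw [lintegral_Iic_inv_ofReal_abs_sub_rpow h2s hx]
  ring
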